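/- Let R = k[x,y,z], char(k) = 0, and let M be the R-module with generators δ_2, δ_3, δ_4 and relations y δ_2 + 2z δ_3 = 0 and x δ_2 - 3y δ_3 + z δ_4 = 0. Then the map φ: M → R given by φ(δ_2) = 2z², φ(δ_3) = -yz, φ(δ_4) = -(2xz + 3y²) is well-defined and injective, with image the ideal ⟨2z², yz, 2xz + 3y²⟩. -/

import Mathlib

/-!
If `2z²a - yz b - (2xz + 3y²)c = 0`, then `z ∣ 3y²c`, so `c = qz` because `z` is prime, `3` is a
unit and `z ∤ y`. Cancelling `z` leaves `2z(a - qx) = y(b + 3qy)`, so `a - qx = py` because `y` is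
prime and coprime to `2z`, and then `b + 3qy = 2pz`. Hence
`(a, b, c) = p (y, 2z, 0) + q (x, -3y, z)` lies in the module of relations.
-/
open MvPolynomial

/-- The module `M = R³/⟨(y, 2z, 0), (x, -3y, z)⟩`: three generators `δ₂, δ₃, δ₄` with the
relations `y δ₂ + 2z δ₃ = 0` and `x δ₂ - 3y δ₃ + z δ₄ = 0`.
(Here `x = X 0`, `y = X 1`, `z = X 2` in `R = k[x,y,z]`.) -/
noncomputable def relSub19 (k : Type) [Field k] :
    Submodule (MvPolynomial (Fin 3) k) (Fin 3 → MvPolynomial (Fin 3) k) :=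
  Submodule.span _
    {![(X 1 : MvPolynomial (Fin 3) k), 2 * X 2, 0],
      ![(X 0 : MvPolynomial (Fin 3) k), -3 * X 1, X 2]}

/-- The map `φ : M → R` with `φ(δ₂) = 2z²`, `φ(δ₃) = -yz`, `φ(δ₄) = -(2xz + 3y²)`, induced by
`(u₂, u₃, u₄) ↦ 2z²·u₂ - yz·u₃ - (2xz + 3y²)·u₄` (which kills both relations). -/
noncomputable def phi19 (k : Type) [Field k] :
    ((Fin 3 → MvPolynomial (Fin 3) k) ⧸ relSub19 k) →ₗ[MvPolynomial (Fin 3) k]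
      MvPolynomial (Fin 3) k :=
  Submodule.liftQ (relSub19 k)
    ((2 * (X 2 : MvPolynomial (Fin 3) k) ^ 2) • LinearMap.proj 0 +
      (-((X 1 : MvPolynomial (Fin 3) k) * X 2)) • LinearMap.proj 1 +
      (-(2 * (X 0 : MvPolynomial (Fin 3) k) * X 2 + 3 * X 1 ^ 2)) • LinearMap.proj 2)
    (by
      rw [relSub19, Submodule.span_le]
      rintro v hv
      rcases hv with rfl | rfl <;>
        · simp [LinearMap.mem_ker]
          ring)

theorem exists_eq_of_syzygy {A : Type*} [CommRing A] [IsDomain A] {x y z a b c : A}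
    (hy : Prime y) (hz : Prime z) (hyz : ¬y ∣ z) (hzy : ¬z ∣ y)
    (h2 : IsUnit (2 : A)) (h3 : IsUnit (3 : A))
    (h : 2 * z ^ 2 * a - y * z * b - (2 * x * z + 3 * y ^ 2) * c = 0) :
    ∃ p q : A, a = p * y + q * x ∧ b = p * (2 * z) - q * (3 * y) ∧ c = q * z := by
  have hzc : z ∣ c := by
    have : z ∣ 3 * (y ^ 2 * c) := ⟨2 * z * a - y * b - 2 * x * c, by linear_combination -h⟩
    rw [h3.dvd_mul_left] at this
    exact (hz.dvd_or_dvd this).resolve_left fun h' => hzy (hz.dvd_of_dvd_pow h')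
  obtain ⟨q, rfl⟩ := hzc
  have hred : 2 * (z * (a - q * x)) = y * (b + 3 * q * y) := by
    apply mul_left_cancel₀ hz.ne_zero
    linear_combination h
  have hya : y ∣ a - q * x := by
    have : y ∣ 2 * (z * (a - q * x)) := ⟨_, hred⟩
    rw [h2.dvd_mul_left] at this
    exact (hy.dvd_or_dvd this).resolve_left hyz
  obtain ⟨p, hp⟩ := hya
  refine ⟨p, q, by linear_combination hp, ?_, by ring⟩
  apply mul_left_cancel₀ hy.ne_zero
  linear_combination -hred + 2 * z * hp

theorem MvPolynomial.isUnit_ofNat {σ K : Type*} [Field K] [CharZero K] (n : ℕ) [n.AtLeastTwo] :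
    IsUnit (OfNat.ofNat n : MvPolynomial σ K) := by
  simpa only [map_ofNat] using
    (IsUnit.mk0 (OfNat.ofNat n : K) (NeZero.ne _)).map (C : K →+* MvPolynomial σ K)

theorem phi19_mk (k : Type) [Field k] (v : Fin 3 → MvPolynomial (Fin 3) k) :
    phi19 k (Submodule.Quotient.mk v) =
      2 * X 2 ^ 2 * v 0 - X 1 * X 2 * v 1 - (2 * X 0 * X 2 + 3 * X 1 ^ 2) * v 2 := by
  simp only [phi19, Submodule.liftQ_apply, LinearMap.add_apply, LinearMap.smul_apply,
    LinearMap.proj_apply, smul_eq_mul]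
  ring

theorem phi19_injective (k : Type) [Field k] [CharZero k] : Function.Injective (phi19 k) := by
  refine (injective_iff_map_eq_zero _).2 fun m hm => ?_
  induction m using Submodule.Quotient.induction_on with | H v => ?_
  rw [phi19_mk] at hm
  obtain ⟨p, q, h0, h1, h2⟩ := exists_eq_of_syzygy X_prime X_prime
    (mt X_dvd_X.1 (by decide)) (mt X_dvd_X.1 (by decide))
    (MvPolynomial.isUnit_ofNat 2) (MvPolynomial.isUnit_ofNat 3) hm
  rw [Submodule.Quotient.mk_eq_zero, relSub19, Submodule.mem_span_pair]
  refine ⟨p, q, funext fun i => ?_⟩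
  fin_cases i <;> simp [h0, h1, h2, sub_eq_add_neg]

theorem range_phi19 (k : Type) [Field k] :
    LinearMap.range (phi19 k) =
        (Ideal.span {2 * (X 2 : MvPolynomial (Fin 3) k) ^ 2, X 1 * X 2,
            2 * X 0 * X 2 + 3 * (X 1 : MvPolynomial (Fin 3) k) ^ 2} :
          Ideal (MvPolynomial (Fin 3) k)).restrictScalars (MvPolynomial (Fin 3) k) := by
  rw [phi19, Submodule.range_liftQ, Submodule.restrictScalars_self]
  convert Fintype.range_linearCombination (MvPolynomial (Fin 3) k)
    ![(2 * X 2 ^ 2 : MvPolynomial (Fin 3) k), -(X 1 * X 2), -(2 * X 0 * X 2 + 3 * X 1 ^ 2)] using 1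
  · congr 1
    refine LinearMap.ext fun v => ?_
    simp only [LinearMap.add_apply, LinearMap.smul_apply, LinearMap.proj_apply, smul_eq_mul,
      Fintype.linearCombination_apply, Fin.sum_univ_three, Matrix.cons_val_zero,
      Matrix.cons_val_one, Matrix.cons_val_two, Matrix.tail_cons, Matrix.head_cons]
    ring
  · rw [Matrix.range_cons, Matrix.range_cons, Matrix.range_cons_empty]
    change Ideal.span _ = Ideal.span _
    simp only [Set.singleton_union, Ideal.span_insert, Ideal.span_singleton_neg]

/-- Over a field of characteristic `0`, the map
`φ : R³/⟨(y,2z,0), (x,-3y,z)⟩ → R` given by `φ(δ₂) = 2z²`, `φ(δ₃) = -yz`,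
`φ(δ₄) = -(2xz + 3y²)` is a well-defined injective `R`-module homomorphism, with image the
ideal `⟨2z², yz, 2xz + 3y²⟩`. -/
theorem statement_19 (k : Type) [Field k] [CharZero k] :
    Function.Injective (phi19 k) ∧
      LinearMap.range (phi19 k) =
        (Ideal.span {2 * (X 2 : MvPolynomial (Fin 3) k) ^ 2, X 1 * X 2,
            2 * X 0 * X 2 + 3 * (X 1 : MvPolynomial (Fin 3) k) ^ 2} :
          Ideal (MvPolynomial (Fin 3) k)).restrictScalars (MvPolynomial (Fin 3) k) :=
  ⟨phi19_injective k, range_phi19 k⟩
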